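/- arXiv:1003.3736 — 2 statements merged into one kernel-verified Lean document; each statement's English description precedes it below -/
import Mathlib

section
/- Let f: F → F be a non-linear function on a finite field F (i.e., |I_f(t)| > 1 for all t, where I_f(t) := {f(x) + t·x : x ∈ F}). Then there exists a rank-1 Kakeya set K ⊆ F^n with |K| = Σ_{t ∈ F} (|I_f(t)|^n - 1)/(|I_f(t)| - 1). -/
/-!
Normalise a direction `d ≠ 0` so that its last nonzero coordinate, say the `j`-th, is `1`.
The line `t ↦ (f (d i))ᵢ + t • d` then has coordinates `f (d i) + t * d i ∈ I_f(t)` before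
`j`, `f 1 + t` at `j` and `f 0` after `j`, so it lies in a box of size `|I_f(t)| ^ j`. The
union of these boxes over `t` and `j` is a Kakeya set with at most
`∑ₜ (|I_f(t)|ⁿ - 1)/(|I_f(t)| - 1)` points, and it can be padded to exactly that size once
this number is at most `|F|ⁿ`.

That bound follows from `∑ₜ (q - |I_f(t)|) ≥ q`, where `q = |F|`: two distinct points
`x ≠ x'` collide under `x ↦ f x + t * x` for exactly one `t`, while a map with image of size
`s ≥ 2` has at most `(q - 1)(q - s)` collisions, since each of its fibres has at most `q - 1`
points.
-/

open Finset

section Collisions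

variable {α β : Type*} [Fintype α] [DecidableEq β]

lemma card_fiber_lt_card_of_one_lt_card_image {g : α → β} (h : 1 < #(univ.image g)) (y : β) :
    #{x | g x = y} < Fintype.card α := by
  obtain ⟨y', hy', hne⟩ := exists_mem_ne h y
  obtain ⟨x, -, rfl⟩ := mem_image.1 hy'
  exact card_lt_univ_of_notMem (x := x) (by simpa using hne)

def collisions (g : α → β) : Finset (α × α) := {p ∈ univ.offDiag | g p.1 = g p.2}

lemma card_collisions_le (g : α → β) {M : ℕ} (hM : ∀ y, #{x | g x = y} ≤ M) :
    #(collisions g) ≤ M * (Fintype.card α - #(univ.image g)) := by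
  have fiberwise :
      #(collisions g) = ∑ y ∈ univ.image g, #(({x | g x = y} : Finset α).offDiag) := by
    rw [card_eq_sum_card_fiberwise (f := fun p => g p.1) (t := univ.image g)
      (by simp [Set.MapsTo])]
    refine sum_congr rfl fun y _ => congrArg card ?_
    ext ⟨x, x'⟩
    simp only [collisions, mem_filter, mem_offDiag, mem_univ, true_and]
    grind
  have fiber_pos : ∀ y ∈ univ.image g, 1 ≤ #({x | g x = y} : Finset α) := by
    intro y hy
    obtain ⟨x, -, rfl⟩ := mem_image.1 hy
    exact card_pos.2 ⟨x, by simp⟩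
  have excess :
      Fintype.card α - #(univ.image g) = ∑ y ∈ univ.image g, (#{x | g x = y} - 1) := by
    rw [sum_tsub_distrib _ fiber_pos, ← card_eq_sum_card_image, ← card_eq_sum_ones, card_univ]
  rw [fiberwise, excess, mul_sum]
  gcongr with y
  rw [offDiag_card, ← Nat.mul_sub_one]
  exact Nat.mul_le_mul_right _ (hM y)

end Collisions

lemma sum_geomSum_le_pow {ι : Type*} [Fintype ι] (s : ι → ℕ) {q : ℕ}
    (hcard : Fintype.card ι ≤ q) (hs : ∀ i, s i ≤ q) (hq : q ≤ ∑ i, (q - s i))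
    (m : ℕ) :
    ∑ i, ∑ j ∈ range m, s i ^ j ≤ q ^ m := by
  induction m with
  | zero => simp
  | succ k ih =>
    rcases k.eq_zero_or_pos with rfl | hk
    · simpa using hcard
    set G : ι → ℕ := fun i => ∑ j ∈ range k, s i ^ j
    have hG : ∀ i, 1 ≤ G i := fun i =>
      (pow_zero (s i)).symm.trans_le
        (single_le_sum (f := (s i ^ ·)) (fun _ _ => Nat.zero_le _) (mem_range.2 hk))
    calc ∑ i, ∑ j ∈ range (k + 1), s i ^ j = ∑ i, s i * G i + Fintype.card ι := by
          simp only [geom_sum_succ, sum_add_distrib, sum_const, card_univ, smul_eq_mul, mul_one, G]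
      _ ≤ ∑ i, s i * G i + ∑ i, (q - s i) * G i := by
          gcongr
          exact hcard.trans <| hq.trans <| sum_le_sum fun i _ => Nat.le_mul_of_pos_right _ (hG i)
      _ = q * ∑ i, G i := by
          rw [← sum_add_distrib, mul_sum]
          exact sum_congr rfl fun i _ => by rw [← add_mul, Nat.add_sub_cancel' (hs i)]
      _ ≤ q ^ (k + 1) := by
          rw [pow_succ']
          exact Nat.mul_le_mul_left _ ih

section Shear

variable {F : Type*} [Field F] [Fintype F] [DecidableEq F]

/-- The set `I_f(t)` of the paper. -/
def shearImage (f : F → F) (t : F) : Finset F := univ.image fun x => f x + t * x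

lemma card_filter_shear_eq_eq_one (f : F → F) {x x' : F} (h : x ≠ x') :
    #{t | f x + t * x = f x' + t * x'} = 1 := by
  refine card_eq_one.2 ⟨(f x' - f x) / (x - x'), ?_⟩
  ext t
  simp only [mem_filter, mem_univ, true_and, mem_singleton, eq_div_iff (sub_ne_zero.2 h)]
  constructor <;> intro ht <;> linear_combination ht

lemma sum_card_collisions_shear (f : F → F) :
    ∑ t, #(collisions fun x => f x + t * x) = #(univ.offDiag : Finset (F × F)) := by
  simp only [collisions, card_filter]
  rw [sum_comm, card_eq_sum_ones]
  refine sum_congr rfl fun p hp => ?_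
  rw [← card_filter, card_filter_shear_eq_eq_one f (mem_offDiag.1 hp).2.2]

lemma card_le_sum_card_sub_card_shearImage (f : F → F) (hf : ∀ t, 1 < #(shearImage f t)) :
    Fintype.card F ≤ ∑ t, (Fintype.card F - #(shearImage f t)) := by
  set q := Fintype.card F
  have hq : 1 < q := Fintype.one_lt_card
  refine Nat.le_of_mul_le_mul_left ?_ (Nat.sub_pos_of_lt hq)
  calc (q - 1) * q = #(univ.offDiag : Finset (F × F)) := by
        rw [offDiag_card, card_univ, Nat.sub_one_mul]
    _ = ∑ t, #(collisions fun x => f x + t * x) := (sum_card_collisions_shear f).symm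
    _ ≤ ∑ t, (q - 1) * (q - #(shearImage f t)) := sum_le_sum fun t _ =>
        card_collisions_le _ fun y =>
          Nat.le_sub_one_of_lt (card_fiber_lt_card_of_one_lt_card_image (hf t) y)
    _ = (q - 1) * ∑ t, (q - #(shearImage f t)) := (mul_sum _ _ _).symm

end Shear

section Kakeya

variable {F : Type*} [Field F] {n : ℕ}

def IsKakeya (K : Finset (Fin n → F)) : Prop := ∀ d ≠ 0, ∃ b, ∀ t : F, b + t • d ∈ K

lemma IsKakeya.mono {K K' : Finset (Fin n → F)} (hK : IsKakeya K) (hKK' : K ⊆ K') :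
    IsKakeya K' :=
  fun d hd => (hK d hd).imp fun _ hb t => hKK' (hb t)

variable [Fintype F]

lemma exists_isKakeya_card_eq {K : Finset (Fin n → F)} (hK : IsKakeya K) {N : ℕ}
    (hKN : #K ≤ N) (hN : N ≤ Fintype.card F ^ n) :
    ∃ K' : Finset (Fin n → F), IsKakeya K' ∧ #K' = N := by
  obtain ⟨K', hKK', -, hK'⟩ := exists_subsuperset_card_eq (subset_univ K) hKN
    (by simpa [Fintype.card_fun] using hN)
  exact ⟨K', hK.mono hKK', hK'⟩

variable [DecidableEq F]

def shearKakeyaSlice (f : F → F) (t : F) (j : Fin n) : Finset (Fin n → F) :=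
  Fintype.piFinset fun i => if i < j then shearImage f t else if i = j then {f 1 + t} else {f 0}

def shearKakeya (f : F → F) : Finset (Fin n → F) :=
  univ.biUnion fun p : F × Fin n => shearKakeyaSlice f p.1 p.2

lemma card_shearKakeyaSlice (f : F → F) (t : F) (j : Fin n) :
    #(shearKakeyaSlice f t j) = #(shearImage f t) ^ (j : ℕ) := by
  simp only [shearKakeyaSlice, Fintype.card_piFinset, apply_ite card, card_singleton, ite_self,
    prod_ite, prod_const, one_pow, mul_one, filter_gt_eq_Iio, Fin.card_Iio]

lemma card_shearKakeya_le (f : F → F) :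
    #(shearKakeya (n := n) f) ≤ ∑ t, ∑ j ∈ range n, #(shearImage f t) ^ j := by
  refine card_biUnion_le.trans_eq ?_
  simp only [← univ_product_univ, sum_product, card_shearKakeyaSlice]
  exact sum_congr rfl fun t _ => Fin.sum_univ_eq_sum_range (#(shearImage f t) ^ ·) n

lemma exists_last_ne_zero {M : Type*} [Zero M] {d : Fin n → M} (hd : d ≠ 0) :
    ∃ j, d j ≠ 0 ∧ ∀ i, j < i → d i = 0 := by
  classical
  obtain ⟨j, hj, hmax⟩ := exists_max_image {i | d i ≠ 0} id
    (filter_nonempty_iff.2 (by simpa [Function.ne_iff] using hd))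
  refine ⟨j, (mem_filter.1 hj).2, fun i hji => ?_⟩
  by_contra hi
  exact (hmax i (by simpa using hi)).not_gt hji

lemma add_smul_mem_shearKakeyaSlice (f : F → F) {d : Fin n → F} {j : Fin n} (hj : d j ≠ 0)
    (hlast : ∀ i, j < i → d i = 0) (t : F) :
    (fun i => f (d i / d j)) + t • d ∈ shearKakeyaSlice f (t * d j) j := by
  have coord :
      ∀ i, ((fun i => f (d i / d j)) + t • d) i = f (d i / d j) + t * d j * (d i / d j) :=
    fun i => by simp [mul_assoc, mul_div_cancel₀ _ hj]
  refine Fintype.mem_piFinset.2 fun i => ?_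
  rw [coord]
  rcases lt_trichotomy i j with hij | rfl | hji
  · simp [hij, shearImage]
  · simp [div_self hj]
  · simp [hji.not_gt, hji.ne', hlast i hji]

lemma isKakeya_shearKakeya (f : F → F) : IsKakeya (n := n) (shearKakeya f) := by
  intro d hd
  obtain ⟨j, hj, hlast⟩ := exists_last_ne_zero hd
  exact ⟨fun i => f (d i / d j), fun t => mem_biUnion.2
    ⟨(t * d j, j), mem_univ _, add_smul_mem_shearKakeyaSlice f hj hlast t⟩⟩

end Kakeya

theorem kakeya_from_If_general {F : Type} [Field F] [Fintype F] [DecidableEq F]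
    (n : ℕ) (f : F → F)
    (hf : ∀ t : F, 1 < (Finset.image (fun x => f x + t * x) Finset.univ).card) :
    ∃ K : Finset (Fin n → F),
      (∀ d : Fin n → F, d ≠ 0 → ∃ b : Fin n → F, ∀ t : F, b + t • d ∈ K) ∧
      K.card = ∑ t : F,
        ((Finset.image (fun x => f x + t * x) Finset.univ).card ^ n - 1) /
          ((Finset.image (fun x => f x + t * x) Finset.univ).card - 1) := by
  have hsize : ∑ t, ∑ j ∈ range n, #(shearImage f t) ^ j ≤ Fintype.card F ^ n :=
    sum_geomSum_le_pow _ le_rfl (fun t => card_le_univ _)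
      (card_le_sum_card_sub_card_shearImage f hf) n
  obtain ⟨K, hK, hcard⟩ :=
    exists_isKakeya_card_eq (isKakeya_shearKakeya f) (card_shearKakeya_le f) hsize
  exact ⟨K, hK, hcard.trans (sum_congr rfl fun t _ => Nat.geomSum_eq (hf t) n)⟩

theorem kakeya_from_If {F : Type} [Field F] [Fintype F] [DecidableEq F]
    (n : ℕ) (hn : 1 ≤ n) (f : F → F)
    (hf : ∀ t : F, 1 < (Finset.image (fun x => f x + t * x) Finset.univ).card) :
    ∃ K : Finset (Fin n → F),
      (∀ d : Fin n → F, d ≠ 0 → ∃ b : Fin n → F, ∀ t : F, b + t • d ∈ K) ∧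
      K.card = ∑ t : F,
        ((Finset.image (fun x => f x + t * x) Finset.univ).card ^ n - 1) /
          ((Finset.image (fun x => f x + t * x) Finset.univ).card - 1) :=
  kakeya_from_If_general n f hf
end

section
/- Let P be a non-zero polynomial in n variables over a field F, a ∈ Fⁿ, and i ∈ ℕ₀ⁿ a multi-index. Then the multiplicity of the Hasse derivative P^(i) at a satisfies μ(P^(i), a) ≥ μ(P, a) − ‖i‖, where ‖i‖ is the total order of i. -/
/-- `P` vanishes at `a` with multiplicity at least `m`: every monomial of the
shifted polynomial `P(X + a)` has total degree at least `m`.  The multiplicity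
`μ(P, a)` is at least `m` iff this holds. -/
def VanishesWithMult {F : Type} [CommRing F] {n : ℕ}
    (P : MvPolynomial (Fin n) F) (a : Fin n → F) (m : ℕ) : Prop :=
  ∀ d ∈ (MvPolynomial.aeval
      (fun j => MvPolynomial.X j + MvPolynomial.C (a j)) P).support,
    m ≤ d.sum fun _ e => e

/-- The Hasse derivative `P^(i)`: the coefficient of `X^i` in the expansion
`P(X + Y) = Σ_i P^(i)(Y)·X^i`. -/
noncomputable def hasseDeriv {F : Type} [CommRing F] {n : ℕ}
    (P : MvPolynomial (Fin n) F) (i : Fin n →₀ ℕ) : MvPolynomial (Fin n) F :=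
  MvPolynomial.coeff i
    (MvPolynomial.aeval
      (fun j => MvPolynomial.X j +
        MvPolynomial.C (MvPolynomial.X j) :
        Fin n → MvPolynomial (Fin n) (MvPolynomial (Fin n) F)) P)

/-!
Write `T P = P(X + Y)` for the Taylor expansion, a polynomial in `X` over `F[Y]`, so that
`P^(i)` is its `X^i`-coefficient. Expanding `T (c X^u) = c ∏ (X_j + Y_j)^(u_j)` shows that every
monomial `X^i Y^d` occurring in it has `i + d = u`; hence the coefficient of `Y^d` in `P^(i)` can
only be nonzero when `X^(i+d)` occurs in `P`. Since `T` commutes with the shift `X ↦ X + a`, the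
same holds for `P(X + a)`, and a monomial `Y^d` of `P^(i)(X + a)` gives the monomial `X^(i+d)` of
`P(X + a)`, of total degree `|i| + |d| ≥ m`.
-/

namespace MvPolynomial

variable {σ R : Type*} [CommSemiring R]

/-- The Taylor expansion `P ↦ P(X + Y)`, with `X` the outer and `Y` the inner variables. -/
noncomputable def taylorExpand : MvPolynomial σ R →ₐ[R] MvPolynomial σ (MvPolynomial σ R) :=
  aeval fun j => X j + C (X j)

def IsBihomogeneous (u : σ →₀ ℕ) (Q : MvPolynomial σ (MvPolynomial σ R)) : Prop :=
  ∀ i d : σ →₀ ℕ, coeff d (coeff i Q) ≠ 0 → i + d = u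

namespace IsBihomogeneous

theorem mul {u v : σ →₀ ℕ} {p q : MvPolynomial σ (MvPolynomial σ R)}
    (hp : IsBihomogeneous u p) (hq : IsBihomogeneous v q) :
    IsBihomogeneous (u + v) (p * q) := by
  classical
  intro i d h
  rw [coeff_mul, coeff_sum] at h
  obtain ⟨⟨i₁, i₂⟩, hi, h⟩ := Finset.exists_ne_zero_of_sum_ne_zero h
  rw [coeff_mul] at h
  obtain ⟨⟨d₁, d₂⟩, hd, h⟩ := Finset.exists_ne_zero_of_sum_ne_zero h
  rw [Finset.HasAntidiagonal.mem_antidiagonal] at hi hd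
  rw [← hi, ← hd, ← hp _ _ (left_ne_zero_of_mul h), ← hq _ _ (right_ne_zero_of_mul h)]
  abel

theorem C_C (c : R) : IsBihomogeneous (σ := σ) 0 (C (C c)) := by
  classical
  intro i d h
  rw [coeff_C] at h
  split_ifs at h with hi
  · rw [coeff_C] at h
    split_ifs at h with hd
    · rw [← hi, ← hd, add_zero]
    · exact absurd rfl h
  · exact absurd rfl h

theorem X_add_C_X (j : σ) :
    IsBihomogeneous (Finsupp.single j 1) (X j + C (X j) : MvPolynomial σ (MvPolynomial σ R)) := by
  classical
  intro i d h
  rw [coeff_add, coeff_X, coeff_C] at h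
  split_ifs at h with hX hC hC
  · rw [← hC] at hX
    exact absurd hX (Finsupp.single_ne_zero.mpr one_ne_zero)
  · rw [add_zero, coeff_one] at h
    split_ifs at h with hd
    · rw [← hX, ← hd, add_zero]
    · exact absurd rfl h
  · rw [zero_add, coeff_X] at h
    split_ifs at h with hd
    · rw [← hC, ← hd, zero_add]
    · exact absurd rfl h
  · exact absurd (add_zero _) h

theorem X_add_C_X_pow (j : σ) (k : ℕ) :
    IsBihomogeneous (Finsupp.single j k)
      ((X j + C (X j)) ^ k : MvPolynomial σ (MvPolynomial σ R)) := by
  induction k with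
  | zero => simpa using C_C (σ := σ) (1 : R)
  | succ k ih =>
    rw [pow_succ', add_comm k 1, Finsupp.single_add]
    exact (X_add_C_X j).mul ih

end IsBihomogeneous

theorem isBihomogeneous_taylorExpand_monomial (u : σ →₀ ℕ) (c : R) :
    IsBihomogeneous u (taylorExpand (monomial u c)) := by
  induction u using Finsupp.induction with
  | zero => simpa [taylorExpand] using IsBihomogeneous.C_C c
  | single_add j k u _ _ ih =>
    rw [monomial_single_add, map_mul, map_pow, taylorExpand, aeval_X]
    exact (IsBihomogeneous.X_add_C_X_pow j k).mul ih

theorem add_mem_support_of_coeff_coeff_taylorExpand_ne_zero {P : MvPolynomial σ R}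
    {i d : σ →₀ ℕ} (h : coeff d (coeff i (taylorExpand P)) ≠ 0) : i + d ∈ P.support := by
  rw [P.as_sum, map_sum, coeff_sum, coeff_sum] at h
  obtain ⟨u, hu, h⟩ := Finset.exists_ne_zero_of_sum_ne_zero h
  rwa [isBihomogeneous_taylorExpand_monomial u _ i d h]

noncomputable def shift (a : σ → R) : MvPolynomial σ R →ₐ[R] MvPolynomial σ R :=
  aeval fun j => X j + C (a j)

theorem taylorExpand_shift (a : σ → R) (P : MvPolynomial σ R) :
    taylorExpand (shift a P) = map (shift a : MvPolynomial σ R →+* MvPolynomial σ R)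
      (taylorExpand P) := by
  change (taylorExpand.comp (shift a)) P = mapAlgHom (shift a) (taylorExpand P)
  rw [← AlgHom.comp_apply]
  congr 1
  refine algHom_ext fun j => ?_
  simp [taylorExpand, shift, add_assoc]

end MvPolynomial

open MvPolynomial in
theorem multiplicity_hasseDeriv_general {F : Type} [Field F] (n : ℕ)
    (P : MvPolynomial (Fin n) F) (a : Fin n → F) (i : Fin n →₀ ℕ) :
    ∀ m : ℕ, VanishesWithMult P a m →
      VanishesWithMult (hasseDeriv P i) a (m - i.sum fun _ e => e) := by
  intro m hm d hd
  have hshift : shift a (hasseDeriv P i) = coeff i (taylorExpand (shift a P)) := by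
    rw [taylorExpand_shift, coeff_map]
    rfl
  have hid : i + d ∈ (shift a P).support :=
    add_mem_support_of_coeff_coeff_taylorExpand_ne_zero (by rwa [← hshift, ← mem_support_iff])
  have hdeg : m ≤ Finsupp.degree i + Finsupp.degree d := map_add Finsupp.degree i d ▸ hm _ hid
  change m - Finsupp.degree i ≤ Finsupp.degree d
  omega

theorem multiplicity_hasseDeriv {F : Type} [Field F] (n : ℕ) (hn : 1 ≤ n)
    (P : MvPolynomial (Fin n) F) (hP : P ≠ 0) (a : Fin n → F) (i : Fin n →₀ ℕ) :
    ∀ m : ℕ, VanishesWithMult P a m →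
      VanishesWithMult (hasseDeriv P i) a (m - i.sum fun _ e => e) :=
  multiplicity_hasseDeriv_general n P a i
end
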